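/- Let ω ∈ 𝕋 with associated data (I, J, L, L′, M, M′, σ). A (p+q)×(p+q) complex matrix x written blockwise as x = (a b; c d), with a a strictly upper triangular p×p matrix and d a strictly upper triangular q×q matrix, belongs to D_ω if and only if all of the following hold: (i) a_{i,ℓ} = 0 for all i ∈ {1,…,p} and ℓ ∈ L; (ii) c_{j,ℓ} = 0 for all j ∈ {1,…,q} and ℓ ∈ L; (iii) b_{i,m} = 0 for all i ∈ {1,…,p} and m ∈ M; (iv) d_{j,m} = 0 for all j ∈ {1,…,q} and m ∈ M; (v) b_{i,j} = −a_{i,σ(j)} for all i ∈ {1,…,p} and j ∈ J; (vi) d_{j′,j} = −c_{j′,σ(j)} for all j′ ∈ {1,…,q} and j ∈ J; (vii) a_{i,·} = 0 and b_{i,·} = 0 for all i ∈ L′; (viii) c_{j,·} = 0 and d_{j,·} = 0 for all j ∈ M′; (ix) a_{σ(j),i} = c_{j,i} for all j ∈ J and i ∈ {1,…,p}; (x) b_{σ(j),j′} = d_{j,j′} for all j ∈ J and j′ ∈ {1,…,q}. -/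
import Mathlib


open scoped Classical
open Matrix

noncomputable section

/-- A partial permutation matrix: entries in `{0,1}`, at most one `1` in each row
and in each column. -/
def IsPartialPerm {m n : ℕ} (τ : Matrix (Fin m) (Fin n) ℂ) : Prop :=
  (∀ i j, τ i j = 0 ∨ τ i j = 1) ∧
  (∀ i j j', τ i j = 1 → τ i j' = 1 → j = j') ∧
  (∀ i i' j, τ i j = 1 → τ i' j = 1 → i = i')

/-- `(p+q) × r` complex matrices, rows indexed by `Fin p ⊕ Fin q`. -/
abbrev MatT (p q r : ℕ) := Matrix (Fin p ⊕ Fin q) (Fin r) ℂ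

/-- The set `𝕋`: `(p+q) × r` matrices of rank `r` whose top `p × r` and bottom
`q × r` blocks are partial permutation matrices. -/
def InT {p q r : ℕ} (ω : MatT p q r) : Prop :=
  ω.rank = r ∧
  IsPartialPerm (Matrix.of fun (i : Fin p) (c : Fin r) => ω (Sum.inl i) c) ∧
  IsPartialPerm (Matrix.of fun (j : Fin q) (c : Fin r) => ω (Sum.inr j) c)

/-- The permutation matrix of `w`: `(P_w)_{i,j} = 1` iff `i = w j`. -/
def permMat {r : ℕ} (w : Equiv.Perm (Fin r)) : Matrix (Fin r) (Fin r) ℂ :=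
  Matrix.of fun i j => if i = w j then 1 else 0

/-- `[ω]`, the column space of `ω`, as a subspace of `ℂ^{p+q}`. -/
def colSpace {p q r : ℕ} (ω : MatT p q r) : Submodule ℂ (Fin p ⊕ Fin q → ℂ) :=
  LinearMap.range ω.mulVecLin

/-- `i ∈ I`: some column of `ω` has a `1` in row `i` (top block) and a `1` in some
bottom row. -/
def memI {p q r : ℕ} (ω : MatT p q r) (i : Fin p) : Prop :=
  ∃ c, ω (Sum.inl i) c = 1 ∧ ∃ j : Fin q, ω (Sum.inr j) c = 1

/-- `i ∈ L`: some column of `ω` has a `1` in row `i` (top block) and no other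
nonzero entry. -/
def memL {p q r : ℕ} (ω : MatT p q r) (i : Fin p) : Prop :=
  ∃ c, ω (Sum.inl i) c = 1 ∧ ∀ k, k ≠ Sum.inl i → ω k c = 0

/-- `i ∈ L'`: row `i` of the top block is zero. -/
def memL' {p q r : ℕ} (ω : MatT p q r) (i : Fin p) : Prop :=
  ∀ c, ω (Sum.inl i) c = 0

/-- `j ∈ J`: some column of `ω` has a `1` in row `p+j` and a `1` in some top row. -/
def memJ {p q r : ℕ} (ω : MatT p q r) (j : Fin q) : Prop :=
  ∃ c, ω (Sum.inr j) c = 1 ∧ ∃ i : Fin p, ω (Sum.inl i) c = 1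

/-- `j ∈ M`: some column of `ω` has a `1` in row `p+j` and no other nonzero entry. -/
def memM {p q r : ℕ} (ω : MatT p q r) (j : Fin q) : Prop :=
  ∃ c, ω (Sum.inr j) c = 1 ∧ ∀ k, k ≠ Sum.inr j → ω k c = 0

/-- `j ∈ M'`: row `p+j` of `ω` (i.e. row `j` of the bottom block) is zero. -/
def memM' {p q r : ℕ} (ω : MatT p q r) (j : Fin q) : Prop :=
  ∀ c, ω (Sum.inr j) c = 0

/-- The conormal direction `D_ω`: block matrices `(a b; c d)` with `a, d` strictly
upper triangular, column space contained in `[ω]`, and `[ω]` contained in the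
kernel. -/
def Dset {p q r : ℕ} (ω : MatT p q r) :
    Set (Matrix (Fin p ⊕ Fin q) (Fin p ⊕ Fin q) ℂ) :=
  {x | (∀ i j : Fin p, j ≤ i → x (Sum.inl i) (Sum.inl j) = 0) ∧
       (∀ i j : Fin q, j ≤ i → x (Sum.inr i) (Sum.inr j) = 0) ∧
       LinearMap.range x.mulVecLin ≤ colSpace ω ∧
       colSpace ω ≤ LinearMap.ker x.mulVecLin}

section Helpers

variable {p q r : ℕ} (ω : MatT p q r)

lemma entries01 (hω : InT ω) : ∀ k c, ω k c = 0 ∨ ω k c = 1 := by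
  rintro (i | j) c
  · exact hω.2.1.1 i c
  · exact hω.2.2.1 j c

lemma rowUnique (hω : InT ω) : ∀ k c c', ω k c = 1 → ω k c' = 1 → c = c' := by
  rintro (i | j) c c' h h'
  · exact hω.2.1.2.1 i c c' h h'
  · exact hω.2.2.2.1 j c c' h h'

lemma colTopUnique (hω : InT ω) : ∀ i i' c, ω (Sum.inl i) c = 1 → ω (Sum.inl i') c = 1 → i = i' :=
  fun i i' c h h' => hω.2.1.2.2 i i' c h h'

lemma colBotUnique (hω : InT ω) : ∀ j j' c, ω (Sum.inr j) c = 1 → ω (Sum.inr j') c = 1 → j = j' :=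
  fun j j' c h h' => hω.2.2.2.2 j j' c h h'

lemma sigma_spec (hω : InT ω) (σ : Fin q → Fin p)
    (hσ : ∀ j, memJ ω j → ∃ c, ω (Sum.inl (σ j)) c = 1 ∧ ω (Sum.inr j) c = 1)
    {j c i} (hj : ω (Sum.inr j) c = 1) (hi : ω (Sum.inl i) c = 1) : i = σ j := by
  obtain ⟨c', h1, h2⟩ := hσ j ⟨c, hj, i, hi⟩
  have hcc : c = c' := rowUnique ω hω (Sum.inr j) c c' hj h2
  exact colTopUnique ω hω i (σ j) c hi (hcc ▸ h1)

lemma sumTop1 (hω : InT ω) {c0 l} (h : ω (Sum.inl l) c0 = 1) (f : Fin p → ℂ) :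
    ∑ i, f i * ω (Sum.inl i) c0 = f l := by
  rw [Finset.sum_eq_single l]
  · simp [h]
  · intro i _ hil
    rcases entries01 ω hω (Sum.inl i) c0 with h0 | h1
    · simp [h0]
    · exact absurd (colTopUnique ω hω i l c0 h1 h) hil
  · simp

lemma sumTop0 (hω : InT ω) {c0} (h : ∀ i, ω (Sum.inl i) c0 ≠ 1) (f : Fin p → ℂ) :
    ∑ i, f i * ω (Sum.inl i) c0 = 0 := by
  refine Finset.sum_eq_zero fun i _ => ?_
  rcases entries01 ω hω (Sum.inl i) c0 with h0 | h1
  · simp [h0]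
  · exact absurd h1 (h i)

lemma sumBot1 (hω : InT ω) {c0 m} (h : ω (Sum.inr m) c0 = 1) (f : Fin q → ℂ) :
    ∑ j, f j * ω (Sum.inr j) c0 = f m := by
  rw [Finset.sum_eq_single m]
  · simp [h]
  · intro j _ hjm
    rcases entries01 ω hω (Sum.inr j) c0 with h0 | h1
    · simp [h0]
    · exact absurd (colBotUnique ω hω j m c0 h1 h) hjm
  · simp

lemma sumBot0 (hω : InT ω) {c0} (h : ∀ j, ω (Sum.inr j) c0 ≠ 1) (f : Fin q → ℂ) :
    ∑ j, f j * ω (Sum.inr j) c0 = 0 := by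
  refine Finset.sum_eq_zero fun j _ => ?_
  rcases entries01 ω hω (Sum.inr j) c0 with h0 | h1
  · simp [h0]
  · exact absurd h1 (h j)

lemma sumRow1 (hω : InT ω) {k c0} (h : ω k c0 = 1) (u : Fin r → ℂ) :
    ∑ c, ω k c * u c = u c0 := by
  rw [Finset.sum_eq_single c0]
  · simp [h]
  · intro c _ hc
    rcases entries01 ω hω k c with h0 | h1
    · simp [h0]
    · exact absurd (rowUnique ω hω k c c0 h1 h) hc
  · simp

end Helpers
section Helpers2

variable {p q r : ℕ} (ω : MatT p q r)

lemma mem_colSpace_iff (hω : InT ω) (σ : Fin q → Fin p)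
    (hσ : ∀ j, memJ ω j → ∃ c, ω (Sum.inl (σ j)) c = 1 ∧ ω (Sum.inr j) c = 1)
    (v : Fin p ⊕ Fin q → ℂ) :
    v ∈ colSpace ω ↔
      (∀ i, memL' ω i → v (Sum.inl i) = 0) ∧
      (∀ j, memM' ω j → v (Sum.inr j) = 0) ∧
      (∀ j, memJ ω j → v (Sum.inl (σ j)) = v (Sum.inr j)) := by
  constructor
  · rintro ⟨u, rfl⟩
    refine ⟨fun i hi => ?_, fun j hj => ?_, fun j hj => ?_⟩
    · simp only [Matrix.mulVecLin_apply, Matrix.mulVec, dotProduct]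
      exact Finset.sum_eq_zero fun c _ => by simp [hi c]
    · simp only [Matrix.mulVecLin_apply, Matrix.mulVec, dotProduct]
      exact Finset.sum_eq_zero fun c _ => by simp [hj c]
    · obtain ⟨c0, h1, h2⟩ := hσ j hj
      simp only [Matrix.mulVecLin_apply, Matrix.mulVec, dotProduct]
      rw [sumRow1 ω hω h1, sumRow1 ω hω h2]
  · rintro ⟨h1, h2, h3⟩
    classical
    refine ⟨fun c => if h : ∃ i, ω (Sum.inl i) c = 1 then v (Sum.inl h.choose)
      else if h' : ∃ j, ω (Sum.inr j) c = 1 then v (Sum.inr h'.choose) else 0, ?_⟩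
    funext k
    simp only [Matrix.mulVecLin_apply, Matrix.mulVec, dotProduct]
    rcases k with i | j
    · by_cases hex : ∃ c, ω (Sum.inl i) c = 1
      · obtain ⟨c0, hc0⟩ := hex
        rw [sumRow1 ω hω hc0]
        have ht : ∃ i', ω (Sum.inl i') c0 = 1 := ⟨i, hc0⟩
        rw [dif_pos ht, colTopUnique ω hω ht.choose i c0 ht.choose_spec hc0]
      · have hi : memL' ω i := fun c => by
          rcases entries01 ω hω (Sum.inl i) c with h0 | h1
          · exact h0
          · exact absurd ⟨c, h1⟩ hex
        rw [h1 i hi]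
        exact Finset.sum_eq_zero fun c _ => by simp [hi c]
    · by_cases hex : ∃ c, ω (Sum.inr j) c = 1
      · obtain ⟨c0, hc0⟩ := hex
        rw [sumRow1 ω hω hc0]
        by_cases ht : ∃ i, ω (Sum.inl i) c0 = 1
        · rw [dif_pos ht]
          have hj : memJ ω j := ⟨c0, hc0, ht.choose, ht.choose_spec⟩
          rw [sigma_spec ω hω σ hσ hc0 ht.choose_spec]
          exact h3 j hj
        · have hb : ∃ j', ω (Sum.inr j') c0 = 1 := ⟨j, hc0⟩
          rw [dif_neg ht, dif_pos hb, colBotUnique ω hω hb.choose j c0 hb.choose_spec hc0]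
      · have hj : memM' ω j := fun c => by
          rcases entries01 ω hω (Sum.inr j) c with h0 | h1
          · exact h0
          · exact absurd ⟨c, h1⟩ hex
        rw [h2 j hj]
        exact Finset.sum_eq_zero fun c _ => by simp [hj c]

lemma range_le_iff (x : Matrix (Fin p ⊕ Fin q) (Fin p ⊕ Fin q) ℂ)
    (S : Submodule ℂ (Fin p ⊕ Fin q → ℂ)) :
    LinearMap.range x.mulVecLin ≤ S ↔ ∀ k, (fun s => x s k) ∈ S := by
  constructor
  · intro h k
    have he : (fun s => x s k) = x.mulVec (Pi.single k 1) := by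
      funext s
      simp [Matrix.mulVec, dotProduct, Pi.single_apply]
    rw [he]
    exact h ⟨Pi.single k 1, rfl⟩
  · rintro h _ ⟨v, rfl⟩
    have he : x.mulVecLin v = ∑ k, v k • (fun s => x s k) := by
      funext s
      simp [Matrix.mulVecLin_apply, Matrix.mulVec, dotProduct, Finset.sum_apply, mul_comm]
    rw [he]
    exact Submodule.sum_mem _ fun k _ => Submodule.smul_mem _ _ (h k)

lemma colSpace_le_ker_iff (x : Matrix (Fin p ⊕ Fin q) (Fin p ⊕ Fin q) ℂ) :
    colSpace ω ≤ LinearMap.ker x.mulVecLin ↔ ∀ c0 k, ∑ s, x k s * ω s c0 = 0 := by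
  constructor
  · intro h c0 k
    have hm : ω.mulVecLin (Pi.single c0 1) ∈ colSpace ω := ⟨Pi.single c0 1, rfl⟩
    have h0 := h hm
    rw [LinearMap.mem_ker] at h0
    have he : ω.mulVecLin (Pi.single c0 1) = fun s => ω s c0 := by
      funext s
      simp [Matrix.mulVecLin_apply, Matrix.mulVec, dotProduct, Pi.single_apply]
    rw [he] at h0
    have := congrFun h0 k
    simpa [Matrix.mulVecLin_apply, Matrix.mulVec, dotProduct] using this
  · rintro h _ ⟨u, rfl⟩
    rw [LinearMap.mem_ker]
    have hxy : x * ω = 0 := by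
      ext k c0
      rw [Matrix.mul_apply]
      simpa using h c0 k
    simp [Matrix.mulVecLin_apply, Matrix.mulVec_mulVec, hxy]

end Helpers2
/-- explicit description of the conormal direction `D_ω`. -/
theorem Dset_membership_iff (p q r : ℕ) (hr : r ≤ p + q) (ω : MatT p q r)
    (hω : InT ω) (σ : Fin q → Fin p)
    (hσ : ∀ j, memJ ω j → ∃ c, ω (Sum.inl (σ j)) c = 1 ∧ ω (Sum.inr j) c = 1)
    (a : Matrix (Fin p) (Fin p) ℂ) (b : Matrix (Fin p) (Fin q) ℂ)
    (c : Matrix (Fin q) (Fin p) ℂ) (d : Matrix (Fin q) (Fin q) ℂ)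
    (ha : ∀ i j : Fin p, j ≤ i → a i j = 0)
    (hd : ∀ i j : Fin q, j ≤ i → d i j = 0) :
    Matrix.fromBlocks a b c d ∈ Dset ω ↔
      ((∀ (i : Fin p) (l : Fin p), memL ω l → a i l = 0) ∧
       (∀ (j : Fin q) (l : Fin p), memL ω l → c j l = 0) ∧
       (∀ (i : Fin p) (m : Fin q), memM ω m → b i m = 0) ∧
       (∀ (j : Fin q) (m : Fin q), memM ω m → d j m = 0) ∧
       (∀ (i : Fin p) (j : Fin q), memJ ω j → b i j = - a i (σ j)) ∧
       (∀ (j' j : Fin q), memJ ω j → d j' j = - c j' (σ j)) ∧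
       (∀ i : Fin p, memL' ω i → (∀ k, a i k = 0) ∧ ∀ m, b i m = 0) ∧
       (∀ j : Fin q, memM' ω j → (∀ k, c j k = 0) ∧ ∀ m, d j m = 0) ∧
       (∀ j : Fin q, memJ ω j → ∀ i : Fin p, a (σ j) i = c j i) ∧
       (∀ j : Fin q, memJ ω j → ∀ j' : Fin q, b (σ j) j' = d j j')) := by
  have hmem : Matrix.fromBlocks a b c d ∈ Dset ω ↔
      (LinearMap.range (Matrix.fromBlocks a b c d).mulVecLin ≤ colSpace ω ∧
        colSpace ω ≤ LinearMap.ker (Matrix.fromBlocks a b c d).mulVecLin) := by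
    constructor
    · rintro ⟨-, -, h1, h2⟩; exact ⟨h1, h2⟩
    · rintro ⟨h1, h2⟩
      exact ⟨fun i k h => by simpa using ha i k h, fun i k h => by simpa using hd i k h, h1, h2⟩
  rw [hmem, range_le_iff, colSpace_le_ker_iff ω]
  simp only [mem_colSpace_iff ω hω σ hσ]
  constructor
  · rintro ⟨hrange, hker⟩
    have hker' : ∀ c0 k,
        (∑ i, Matrix.fromBlocks a b c d k (Sum.inl i) * ω (Sum.inl i) c0) +
        (∑ j, Matrix.fromBlocks a b c d k (Sum.inr j) * ω (Sum.inr j) c0) = 0 := by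
      intro c0 k
      have h := hker c0 k
      rwa [Fintype.sum_sum_type] at h
    have hL : ∀ (k) (l : Fin p), memL ω l → Matrix.fromBlocks a b c d k (Sum.inl l) = 0 := by
      rintro k l ⟨c0, h1, h0⟩
      have hk := hker' c0 k
      rw [sumTop1 ω hω h1, sumBot0 ω hω (fun j hj => by
        rw [h0 (Sum.inr j) (by simp)] at hj; exact zero_ne_one hj)] at hk
      simpa using hk
    have hM : ∀ (k) (m : Fin q), memM ω m → Matrix.fromBlocks a b c d k (Sum.inr m) = 0 := by
      rintro k m ⟨c0, h1, h0⟩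
      have hk := hker' c0 k
      rw [sumBot1 ω hω h1, sumTop0 ω hω (fun i hi => by
        rw [h0 (Sum.inl i) (by simp)] at hi; exact zero_ne_one hi)] at hk
      simpa using hk
    have hJ : ∀ (k) (j : Fin q), memJ ω j →
        Matrix.fromBlocks a b c d k (Sum.inl (σ j)) +
        Matrix.fromBlocks a b c d k (Sum.inr j) = 0 := by
      rintro k j hj
      obtain ⟨c0, hs1, hs2⟩ := hσ j hj
      have hk := hker' c0 k
      rwa [sumTop1 ω hω hs1, sumBot1 ω hω hs2] at hk
    refine ⟨fun i l hl => by simpa using hL (Sum.inl i) l hl,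
      fun j l hl => by simpa using hL (Sum.inr j) l hl,
      fun i m hm => by simpa using hM (Sum.inl i) m hm,
      fun j m hm => by simpa using hM (Sum.inr j) m hm,
      fun i j hj => ?_, fun j' j hj => ?_,
      fun i hi => ⟨fun k => by simpa using (hrange (Sum.inl k)).1 i hi,
        fun m => by simpa using (hrange (Sum.inr m)).1 i hi⟩,
      fun j hj => ⟨fun k => by simpa using (hrange (Sum.inl k)).2.1 j hj,
        fun m => by simpa using (hrange (Sum.inr m)).2.1 j hj⟩,
      fun j hj i => by simpa using (hrange (Sum.inl i)).2.2 j hj,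
      fun j hj j' => by simpa using (hrange (Sum.inr j')).2.2 j hj⟩
    · have h := hJ (Sum.inl i) j hj
      simp only [Matrix.fromBlocks_apply₁₁, Matrix.fromBlocks_apply₁₂] at h
      linear_combination h
    · have h := hJ (Sum.inr j') j hj
      simp only [Matrix.fromBlocks_apply₂₁, Matrix.fromBlocks_apply₂₂] at h
      linear_combination h
  · rintro ⟨h1, h2, h3, h4, h5, h6, h7, h8, h9, h10⟩
    constructor
    · rintro (k | m)
      · exact ⟨fun i hi => by simpa using (h7 i hi).1 k,
          fun j hj => by simpa using (h8 j hj).1 k,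
          fun j hj => by simpa using h9 j hj k⟩
      · exact ⟨fun i hi => by simpa using (h7 i hi).2 m,
          fun j hj => by simpa using (h8 j hj).2 m,
          fun j hj => by simpa using h10 j hj m⟩
    · intro c0 k
      rw [Fintype.sum_sum_type]
      by_cases htop : ∃ l, ω (Sum.inl l) c0 = 1
      · obtain ⟨l, hl⟩ := htop
        by_cases hbot : ∃ m, ω (Sum.inr m) c0 = 1
        · obtain ⟨m, hm⟩ := hbot
          have hmJ : memJ ω m := ⟨c0, hm, l, hl⟩
          have hls : l = σ m := sigma_spec ω hω σ hσ hm hl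
          subst hls
          rw [sumTop1 ω hω hl, sumBot1 ω hω hm]
          rcases k with i | j'
          · simp [h5 i m hmJ]
          · simp [h6 j' m hmJ]
        · have hmL : memL ω l := by
            refine ⟨c0, hl, ?_⟩
            rintro (i | j) hk
            · rcases entries01 ω hω (Sum.inl i) c0 with h0 | h1'
              · exact h0
              · exact absurd (congrArg Sum.inl (colTopUnique ω hω i l c0 h1' hl)) hk
            · rcases entries01 ω hω (Sum.inr j) c0 with h0 | h1'
              · exact h0
              · exact absurd ⟨j, h1'⟩ hbot
          rw [sumTop1 ω hω hl, sumBot0 ω hω (fun j hj => hbot ⟨j, hj⟩)]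
          rcases k with i | j'
          · simp [h1 i l hmL]
          · simp [h2 j' l hmL]
      · by_cases hbot : ∃ m, ω (Sum.inr m) c0 = 1
        · obtain ⟨m, hm⟩ := hbot
          have hmM : memM ω m := by
            refine ⟨c0, hm, ?_⟩
            rintro (i | j) hk
            · rcases entries01 ω hω (Sum.inl i) c0 with h0 | h1'
              · exact h0
              · exact absurd ⟨i, h1'⟩ htop
            · rcases entries01 ω hω (Sum.inr j) c0 with h0 | h1'
              · exact h0
              · exact absurd (congrArg Sum.inr (colBotUnique ω hω j m c0 h1' hm)) hk
          rw [sumBot1 ω hω hm, sumTop0 ω hω (fun i hi => htop ⟨i, hi⟩)]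
          rcases k with i | j'
          · simp [h3 i m hmM]
          · simp [h4 j' m hmM]
        · rw [sumTop0 ω hω (fun i hi => htop ⟨i, hi⟩),
            sumBot0 ω hω (fun j hj => hbot ⟨j, hj⟩), add_zero]
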